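/- arXiv:2603.02151 — 3 statements merged into one kernel-verified Lean document; each statement's English description precedes it below -/
import Mathlib

section
/- Let G be a finite multigraph with vertices v_1,…,v_n, and fix a vector o = (o_3,…,o_n) of integers such that some orientation of G has an outdegree vector whose last n-2 entries are o_3,…,o_n. Then the set of all outdegree vectors of orientations of G whose last n-2 entries equal o_3,…,o_n is exactly {(a - j, b + j, o_3,…,o_n) : 0 ≤ j ≤ k} for some integers a, b, and k ≥ 0. In other words, the possible first coordinates of such outdegree vectors form an interval of consecutive integers. -/
open Finset

variable {V E : Type*}

/-- Number of connected components of the multigraph on vertex set `V`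
with edges `A ⊆ E`, where `ends e` gives the (unordered) endpoints of `e`. -/
noncomputable def numComponents (ends : E → Sym2 V) (A : Finset E) : ℕ :=
  Nat.card (SimpleGraph.fromRel fun x y => ∃ e ∈ A, ends e = s(x, y)).ConnectedComponent

/-- The spanning subgraph `(V, A)` of the multigraph is a forest:
no loops, no parallel edges, and the underlying simple graph is acyclic. -/
def IsForestEdges (ends : E → Sym2 V) (A : Finset E) : Prop :=
  (∀ e ∈ A, ¬ (ends e).IsDiag) ∧ Set.InjOn ends ↑A ∧
    (SimpleGraph.fromRel fun x y => ∃ e ∈ A, ends e = s(x, y)).IsAcyclic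

/-- Subset-expansion evaluation of the Tutte polynomial of the multigraph. -/
noncomputable def tutteEval [Fintype V] [Fintype E] [DecidableEq E]
    (ends : E → Sym2 V) (x y : ℤ) : ℤ :=
  ∑ A : Finset E,
    (x - 1) ^ (numComponents ends A - numComponents ends Finset.univ) *
      (y - 1) ^ (numComponents ends A + A.card - Fintype.card V)

/-- Tail of edge `e` under the orientation `σ` (edges carry a reference
direction `src e → tgt e`; `σ e = true` means the edge is flipped). -/
def otail (src tgt : E → V) (σ : E → Bool) (e : E) : V :=
  if σ e then tgt e else src e

/-- Head of edge `e` under the orientation `σ`. -/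
def ohead (src tgt : E → V) (σ : E → Bool) (e : E) : V :=
  if σ e then src e else tgt e

/-- Outdegree of `v` under the orientation `σ`. -/
def outdeg [Fintype E] [DecidableEq V] (src tgt : E → V) (σ : E → Bool) (v : V) : ℕ :=
  (Finset.univ.filter fun e => otail src tgt σ e = v).card

/-- Indegree of `v` under the orientation `σ`. -/
def indeg [Fintype E] [DecidableEq V] (src tgt : E → V) (σ : E → Bool) (v : V) : ℕ :=
  (Finset.univ.filter fun e => ohead src tgt σ e = v).card

/-- Score of `v` under the orientation `σ`: outdegree minus indegree. -/
def score [Fintype E] [DecidableEq V] (src tgt : E → V) (σ : E → Bool) (v : V) : ℤ :=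
  (outdeg src tgt σ v : ℤ) - (indeg src tgt σ v : ℤ)

/-- Score of `v` in the spanning subdigraph of `G_σ` with arc set `F`. -/
def scoreSub [DecidableEq V] (src tgt : E → V) (σ : E → Bool) (F : Finset E) (v : V) : ℤ :=
  ((F.filter fun e => otail src tgt σ e = v).card : ℤ) -
    ((F.filter fun e => ohead src tgt σ e = v).card : ℤ)

/-- Degree of `v` in the spanning subgraph with edge set `F` (loops count twice). -/
def degIn [DecidableEq V] (src tgt : E → V) (F : Finset E) (v : V) : ℕ :=
  (F.filter fun e => src e = v).card + (F.filter fun e => tgt e = v).card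

/-- Directed reachability in the digraph `G_σ`. -/
def dirReach (src tgt : E → V) (σ : E → Bool) : V → V → Prop :=
  Relation.ReflTransGen fun x y => ∃ e, otail src tgt σ e = x ∧ ohead src tgt σ e = y

section Aux
set_option linter.unusedSectionVars false
variable [Fintype E] [DecidableEq E] [DecidableEq V] (src tgt : E → V)

/-- weight of an edge at v -/
def wt (σ : E → Bool) (v : V) (e : E) : ℤ :=
  (if otail src tgt σ e = v then 1 else 0) - (if ohead src tgt σ e = v then 1 else 0)

lemma scoreSub_eq_sum (σ : E → Bool) (F : Finset E) (v : V) :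
    scoreSub src tgt σ F v = ∑ e ∈ F, wt src tgt σ v e := by
  rw [scoreSub, Finset.card_filter, Finset.card_filter]
  simp only [wt]
  push_cast
  rw [← Finset.sum_sub_distrib]

lemma outdeg_eq_sum (σ : E → Bool) (v : V) :
    (outdeg src tgt σ v : ℤ) = ∑ e : E, (if otail src tgt σ e = v then (1:ℤ) else 0) := by
  rw [outdeg, Finset.card_filter]
  push_cast
  rfl

lemma otail_flip (σ : E → Bool) (e : E) :
    otail src tgt (Function.update σ e (!σ e)) e = ohead src tgt σ e := by
  cases h : σ e <;> simp [otail, ohead, h]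

lemma ohead_flip (σ : E → Bool) (e : E) :
    ohead src tgt (Function.update σ e (!σ e)) e = otail src tgt σ e := by
  cases h : σ e <;> simp [otail, ohead, h]

lemma otail_congr {σ τ : E → Bool} {e : E} (h : σ e = τ e) :
    otail src tgt σ e = otail src tgt τ e := by simp [otail, h]

lemma ohead_congr {σ τ : E → Bool} {e : E} (h : σ e = τ e) :
    ohead src tgt σ e = ohead src tgt τ e := by simp [ohead, h]

lemma wt_congr {σ τ : E → Bool} {e : E} (h : σ e = τ e) (v : V) :
    wt src tgt σ v e = wt src tgt τ v e := by
  rw [wt, wt, otail_congr src tgt h, ohead_congr src tgt h]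

lemma outdeg_flip (σ : E → Bool) (e : E) (v : V) :
    (outdeg src tgt (Function.update σ e (!σ e)) v : ℤ)
      = outdeg src tgt σ v - wt src tgt σ v e := by
  rw [outdeg_eq_sum, outdeg_eq_sum, wt]
  rw [← Finset.sum_erase_add _ _ (Finset.mem_univ e),
      ← Finset.sum_erase_add _ (fun e => if otail src tgt σ e = v then (1:ℤ) else 0) (Finset.mem_univ e)]
  have h1 : ∀ x ∈ Finset.univ.erase e,
      (if otail src tgt (Function.update σ e (!σ e)) x = v then (1:ℤ) else 0)
        = (if otail src tgt σ x = v then (1:ℤ) else 0) := by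
    intro x hx
    rw [otail_congr src tgt (show (Function.update σ e (!σ e)) x = σ x by
      simp [Function.update_of_ne (Finset.mem_erase.1 hx).1])]
  rw [Finset.sum_congr rfl h1, otail_flip]
  ring

lemma scoreSub_congr {σ τ : E → Bool} (F : Finset E) (h : ∀ e ∈ F, σ e = τ e) (v : V) :
    scoreSub src tgt σ F v = scoreSub src tgt τ F v := by
  rw [scoreSub_eq_sum, scoreSub_eq_sum]
  exact Finset.sum_congr rfl fun e he => wt_congr src tgt (h e he) v

lemma scoreSub_erase {σ : E → Bool} {F : Finset E} {e : E} (he : e ∈ F) (v : V) :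
    scoreSub src tgt σ (F.erase e) v = scoreSub src tgt σ F v - wt src tgt σ v e := by
  rw [scoreSub_eq_sum, scoreSub_eq_sum, Finset.sum_erase_eq_sub he]
lemma exists_tail (σ : E → Bool) (F : Finset E) (u : V)
    (h : 0 < scoreSub src tgt σ F u) : ∃ e ∈ F, otail src tgt σ e = u := by
  rw [scoreSub] at h
  have : (F.filter fun e => otail src tgt σ e = u).Nonempty := by
    rw [← Finset.card_pos]; omega
  obtain ⟨e, he⟩ := this
  exact ⟨e, (Finset.mem_filter.1 he).1, (Finset.mem_filter.1 he).2⟩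

lemma step (v1 : V) (F : Finset E) :
    ∀ (σ : E → Bool) (u : V), u ≠ v1 →
      0 < scoreSub src tgt σ F u →
      (∀ v, v ≠ v1 → 0 ≤ scoreSub src tgt σ F v) →
      ∃ σ' : E → Bool,
        (outdeg src tgt σ' v1 : ℤ) = outdeg src tgt σ v1 + 1 ∧
        (outdeg src tgt σ' u : ℤ) = outdeg src tgt σ u - 1 ∧
        ∀ v, v ≠ v1 → v ≠ u → outdeg src tgt σ' v = outdeg src tgt σ v := by
  induction F using Finset.strongInduction with
  | _ F ih =>
    intro σ u hu hpos hnn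
    obtain ⟨e, heF, hte⟩ := exists_tail src tgt σ F u hpos
    set w := ohead src tgt σ e with hwe
    have hwt : ∀ v : V, wt src tgt σ v e
        = (if u = v then 1 else 0) - (if w = v then 1 else 0) := by
      intro v; rw [wt, hte, ← hwe]
    by_cases hw1 : w = v1
    · refine ⟨Function.update σ e (!σ e), ?_, ?_, ?_⟩
      · rw [outdeg_flip, hwt]
        simp [hu, hw1]
      · rw [outdeg_flip, hwt]
        have : w ≠ u := hw1 ▸ fun h => hu h.symm
        simp [this]
      · intro v hv1 hvu
        have : (outdeg src tgt (Function.update σ e (!σ e)) v : ℤ) = outdeg src tgt σ v := by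
          rw [outdeg_flip, hwt]
          have h1 : u ≠ v := fun h => hvu h.symm
          have h2 : w ≠ v := fun h => hv1 (h.symm.trans hw1)
          simp [h1, h2]
        exact_mod_cast this
    · by_cases hwu : w = u
      · refine ih (F.erase e) (Finset.erase_ssubset heF) σ u hu ?_ ?_
        · rw [scoreSub_erase src tgt heF, hwt, hwu]
          simpa using hpos
        · intro v hv
          rw [scoreSub_erase src tgt heF, hwt, hwu]
          have := hnn v hv
          by_cases h : u = v <;> simp [h] <;> omega
      · -- w ∉ {v1, u} : flip e, recurse from w
        set σ₁ := Function.update σ e (!σ e) with hσ₁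
        have hagree : ∀ e' ∈ F.erase e, σ₁ e' = σ e' := fun e' he' =>
          Function.update_of_ne (Finset.mem_erase.1 he').1 _ σ
        have hsc : ∀ v, scoreSub src tgt σ₁ (F.erase e) v
            = scoreSub src tgt σ F v - wt src tgt σ v e := by
          intro v
          rw [scoreSub_congr src tgt _ hagree, scoreSub_erase src tgt heF]
        have hposw : 0 < scoreSub src tgt σ₁ (F.erase e) w := by
          rw [hsc, hwt, if_neg (fun h => hwu h.symm), if_pos rfl]
          have := hnn w hw1
          omega
        have hnnw : ∀ v, v ≠ v1 → 0 ≤ scoreSub src tgt σ₁ (F.erase e) v := by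
          intro v hv
          rw [hsc, hwt]
          have := hnn v hv
          by_cases h : u = v
          · subst h; have := hpos; by_cases h2 : w = u <;> simp [h2] <;> omega
          · by_cases h2 : w = v <;> simp [h, h2] <;> omega
        obtain ⟨σ', h1, h2, h3⟩ := ih (F.erase e) (Finset.erase_ssubset heF) σ₁ w hw1 hposw hnnw
        have hflip : ∀ v, (outdeg src tgt σ₁ v : ℤ) = outdeg src tgt σ v - wt src tgt σ v e :=
            fun v => outdeg_flip src tgt σ e v
        refine ⟨σ', ?_, ?_, ?_⟩
        · rw [h1, hflip, hwt]
          have h1' : u ≠ v1 := hu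
          simp [h1', hw1]
        · have huw : u ≠ w := fun h => hwu h.symm
          have : (outdeg src tgt σ' u : ℤ) = outdeg src tgt σ₁ u := by
            exact_mod_cast h3 u hu huw
          rw [this, hflip, hwt]
          have : w ≠ u := hwu
          simp [this]
        · intro v hv1 hvu
          by_cases hvw : v = w
          · have : (outdeg src tgt σ' v : ℤ) = outdeg src tgt σ v := by
              rw [hvw, h2, hflip, hwt]
              have h1' : u ≠ w := fun h => hwu h.symm
              simp [h1']
            exact_mod_cast this
          · have : (outdeg src tgt σ' v : ℤ) = outdeg src tgt σ v := by
              have := h3 v hv1 hvw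
              rw [show (outdeg src tgt σ' v : ℤ) = (outdeg src tgt σ₁ v : ℤ) by exact_mod_cast this,
                hflip, hwt]
              have h1' : u ≠ v := fun h => hvu h.symm
              have h2' : w ≠ v := fun h => hvw h.symm
              simp [h1', h2']
            exact_mod_cast this
end Aux

section Aux2
set_option linter.unusedSectionVars false
variable [Fintype E] [DecidableEq E] [DecidableEq V] (src tgt : E → V)

lemma otail_of_flipne {σ τ : E → Bool} {e : E} (h : σ e ≠ τ e) :
    otail src tgt τ e = ohead src tgt σ e := by
  cases h1 : σ e <;> cases h2 : τ e <;> simp_all [otail, ohead]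

lemma outdeg_sub (σ τ : E → Bool) (v : V) :
    (outdeg src tgt σ v : ℤ) - outdeg src tgt τ v
      = scoreSub src tgt σ (Finset.univ.filter fun e => σ e ≠ τ e) v := by
  rw [outdeg_eq_sum, outdeg_eq_sum, scoreSub_eq_sum, Finset.sum_filter,
    ← Finset.sum_sub_distrib]
  refine Finset.sum_congr rfl fun e _ => ?_
  by_cases h : σ e = τ e
  · rw [otail_congr src tgt h]; simp [h]
  · rw [if_pos h, wt, otail_of_flipne src tgt h]
    try ring

/-- all tails and heads (for both orientations) -/
def verts (σ τ : E → Bool) : Finset V :=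
  ((Finset.univ.image (otail src tgt σ) ∪ Finset.univ.image (ohead src tgt σ)) ∪
    (Finset.univ.image (otail src tgt τ) ∪ Finset.univ.image (ohead src tgt τ)))

lemma sum_scoreSub (σ τ : E → Bool) (F : Finset E) :
    ∑ v ∈ verts src tgt σ τ, scoreSub src tgt σ F v = 0 := by
  have h1 : ∑ v ∈ verts src tgt σ τ,
      ((F.filter fun e => otail src tgt σ e = v).card) = F.card := by
    refine (Finset.card_eq_sum_card_fiberwise fun e _ => ?_).symm
    exact Finset.mem_union_left _ (Finset.mem_union_left _
      (Finset.mem_image_of_mem _ (Finset.mem_univ e)))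
  have h2 : ∑ v ∈ verts src tgt σ τ,
      ((F.filter fun e => ohead src tgt σ e = v).card) = F.card := by
    refine (Finset.card_eq_sum_card_fiberwise fun e _ => ?_).symm
    exact Finset.mem_union_left _ (Finset.mem_union_right _
      (Finset.mem_image_of_mem _ (Finset.mem_univ e)))
  have : ∑ v ∈ verts src tgt σ τ, scoreSub src tgt σ F v
      = (∑ v ∈ verts src tgt σ τ, ((F.filter fun e => otail src tgt σ e = v).card : ℤ))
        - ∑ v ∈ verts src tgt σ τ, ((F.filter fun e => ohead src tgt σ e = v).card : ℤ) := by
    rw [← Finset.sum_sub_distrib]; rfl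
  rw [this]
  rw [show (∑ v ∈ verts src tgt σ τ, ((F.filter fun e => otail src tgt σ e = v).card : ℤ))
      = ((∑ v ∈ verts src tgt σ τ, (F.filter fun e => otail src tgt σ e = v).card : ℕ) : ℤ) by
    push_cast; rfl]
  rw [show (∑ v ∈ verts src tgt σ τ, ((F.filter fun e => ohead src tgt σ e = v).card : ℤ))
      = ((∑ v ∈ verts src tgt σ τ, (F.filter fun e => ohead src tgt σ e = v).card : ℕ) : ℤ) by
    push_cast; rfl]
  rw [h1, h2, sub_self]

lemma outdeg_zero_of_not_mem (σ τ : E → Bool) {v : V}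
    (hv : v ∉ verts src tgt σ τ) : outdeg src tgt σ v = 0 := by
  rw [outdeg, Finset.card_eq_zero, Finset.filter_eq_empty_iff]
  intro e _ h
  exact hv (Finset.mem_union_left _ (Finset.mem_union_left _
    (h ▸ Finset.mem_image_of_mem _ (Finset.mem_univ e))))

lemma balance {v1 v2 : V} (h12 : v1 ≠ v2) (σ τ : E → Bool)
    (hm : ∀ v, v ≠ v1 → v ≠ v2 → outdeg src tgt σ v = outdeg src tgt τ v) :
    (outdeg src tgt σ v1 : ℤ) + outdeg src tgt σ v2
      = outdeg src tgt τ v1 + outdeg src tgt τ v2 := by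
  set f : V → ℤ := fun v => (outdeg src tgt σ v : ℤ) - outdeg src tgt τ v with hf
  have hVs : ∑ v ∈ verts src tgt σ τ, f v = 0 := by
    have hτ : ∀ v, v ∉ verts src tgt σ τ → outdeg src tgt τ v = 0 := by
      intro v hv
      refine outdeg_zero_of_not_mem src tgt τ σ ?_
      simp only [verts, Finset.mem_union] at hv ⊢
      tauto
    have heq : ∀ v ∈ verts src tgt σ τ, f v
        = scoreSub src tgt σ (Finset.univ.filter fun e => σ e ≠ τ e) v :=
      fun v _ => outdeg_sub src tgt σ τ v
    rw [Finset.sum_congr rfl heq, sum_scoreSub]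
  have hzero : ∀ v, v ∉ verts src tgt σ τ → f v = 0 := by
    intro v hv
    have h1 := outdeg_zero_of_not_mem src tgt σ τ hv
    have h2 : outdeg src tgt τ v = 0 := by
      refine outdeg_zero_of_not_mem src tgt τ σ ?_
      simp only [verts, Finset.mem_union] at hv ⊢
      tauto
    simp [hf, h1, h2]
  have hsub1 : ∑ v ∈ verts src tgt σ τ, f v
      = ∑ v ∈ verts src tgt σ τ ∪ {v1, v2}, f v := by
    refine Finset.sum_subset Finset.subset_union_left fun x hx hx' => ?_
    exact hzero x hx'
  have hsub2 : ∑ v ∈ ({v1, v2} : Finset V), f v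
      = ∑ v ∈ verts src tgt σ τ ∪ {v1, v2}, f v := by
    refine Finset.sum_subset Finset.subset_union_right fun x hx hx' => ?_
    have hx1 : x ≠ v1 := fun h => hx' (by simp [h])
    have hx2 : x ≠ v2 := fun h => hx' (by simp [h])
    simp [hf, hm x hx1 hx2]
  have hpair : ∑ v ∈ ({v1, v2} : Finset V), f v = f v1 + f v2 :=
    Finset.sum_pair h12
  have : f v1 + f v2 = 0 := by rw [← hpair, hsub2, ← hsub1, hVs]
  simp only [hf] at this
  linarith [this]
end Aux2

section Aux3
set_option linter.unusedSectionVars false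
variable [Fintype E] [DecidableEq E] [DecidableEq V] (src tgt : E → V)

lemma increment {v1 v2 : V} (h12 : v1 ≠ v2) (σ τ : E → Bool)
    (hm : ∀ v, v ≠ v1 → v ≠ v2 → outdeg src tgt σ v = outdeg src tgt τ v)
    (hlt : outdeg src tgt σ v1 < outdeg src tgt τ v1) :
    ∃ σ', outdeg src tgt σ' v1 = outdeg src tgt σ v1 + 1 ∧
      ∀ v, v ≠ v1 → v ≠ v2 → outdeg src tgt σ' v = outdeg src tgt σ v := by
  set D := Finset.univ.filter fun e => σ e ≠ τ e with hD
  have hfs : ∀ v, scoreSub src tgt σ D v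
      = (outdeg src tgt σ v : ℤ) - outdeg src tgt τ v :=
    fun v => (outdeg_sub src tgt σ τ v).symm
  have hbal := balance src tgt h12 σ τ hm
  have hpos : 0 < scoreSub src tgt σ D v2 := by
    rw [hfs]
    have : (outdeg src tgt σ v1 : ℤ) < outdeg src tgt τ v1 := by exact_mod_cast hlt
    linarith
  have hnn : ∀ v, v ≠ v1 → 0 ≤ scoreSub src tgt σ D v := by
    intro v hv
    by_cases h : v = v2
    · subst h; linarith
    · rw [hfs, hm v hv h]; simp
  obtain ⟨σ', h1, _, h3⟩ := step src tgt v1 D σ v2 (Ne.symm h12) hpos hnn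
  exact ⟨σ', by exact_mod_cast h1, fun v hv1 hv2 => h3 v hv1 hv2⟩
end Aux3


/-- Fixing the outdegrees of all vertices except `v1, v2` to given values `g`,
the set of outdegree vectors of orientations of `G` with those fixed values is
exactly `{(a - j, b + j, g) : 0 ≤ j ≤ k}` for some `a, b, k`. -/
theorem stmt_6 [Fintype E] [DecidableEq V] (src tgt : E → V)
    (v1 v2 : V) (h12 : v1 ≠ v2) (g : V → ℕ) (σ0 : E → Bool)
    (h0 : ∀ v, v ≠ v1 → v ≠ v2 → outdeg src tgt σ0 v = g v) :
    ∃ a b k : ℕ,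
      {d : V → ℕ | (∃ σ : E → Bool, d = outdeg src tgt σ) ∧
          ∀ v, v ≠ v1 → v ≠ v2 → d v = g v} =
      {d : V → ℕ | ∃ j ≤ k, d v1 + j = a ∧ d v2 = b + j ∧
          ∀ v, v ≠ v1 → v ≠ v2 → d v = g v} := by
  classical
  set P : ℕ → Prop := fun m => ∃ σ : E → Bool, outdeg src tgt σ v1 = m ∧
    ∀ v, v ≠ v1 → v ≠ v2 → outdeg src tgt σ v = g v with hP
  have hbound : ∀ m, P m → m ≤ Fintype.card E := by
    rintro m ⟨σ, hσ, -⟩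
    rw [← hσ, outdeg, ← Finset.card_univ]
    exact Finset.card_filter_le _ _
  have hstep : ∀ m M, P m → P M → m < M → P (m + 1) := by
    rintro m M ⟨σ, hσ, hσc⟩ ⟨τ, hτ, hτc⟩ hlt
    have hm : ∀ v, v ≠ v1 → v ≠ v2 → outdeg src tgt σ v = outdeg src tgt τ v :=
      fun v h1 h2 => (hσc v h1 h2).trans (hτc v h1 h2).symm
    obtain ⟨σ', h1, h3⟩ := increment src tgt h12 σ τ hm (by rw [hσ, hτ]; exact hlt)
    exact ⟨σ', by rw [h1, hσ], fun v hv1 hv2 => (h3 v hv1 hv2).trans (hσc v hv1 hv2)⟩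
  have hint : ∀ m M, P m → P M → ∀ j, m ≤ j → j ≤ M → P j := by
    intro m M hm hM
    have key : ∀ d, m + d ≤ M → P (m + d) := by
      intro d
      induction d with
      | zero => intro _; simpa using hm
      | succ d ih =>
        intro h
        exact hstep (m + d) M (ih (by omega)) hM (by omega)
    intro j hj1 hj2
    have := key (j - m) (by omega)
    rwa [show m + (j - m) = j by omega] at this
  set T : Finset ℕ := (Finset.range (Fintype.card E + 1)).filter P with hT
  have hmemT : ∀ m, m ∈ T ↔ P m := by
    intro m; rw [hT, Finset.mem_filter, Finset.mem_range]
    exact ⟨fun h => h.2, fun h => ⟨by have := hbound m h; omega, h⟩⟩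
  have hne : T.Nonempty := ⟨outdeg src tgt σ0 v1, (hmemT _).2 ⟨σ0, rfl, h0⟩⟩
  set a := T.max' hne with ha
  set m0 := T.min' hne with hm0
  have hma : m0 ≤ a := T.min'_le _ (T.max'_mem hne)
  have hPa : P a := (hmemT a).1 (T.max'_mem hne)
  have hPm0 : P m0 := (hmemT m0).1 (T.min'_mem hne)
  obtain ⟨σa, hσa1, hσac⟩ := hPa
  refine ⟨a, outdeg src tgt σa v2, a - m0, ?_⟩
  set b := outdeg src tgt σa v2 with hb
  have hsum : ∀ σ : E → Bool, (∀ v, v ≠ v1 → v ≠ v2 → outdeg src tgt σ v = g v) →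
      outdeg src tgt σ v1 + outdeg src tgt σ v2 = a + b := by
    intro σ hσc
    have hm : ∀ v, v ≠ v1 → v ≠ v2 → outdeg src tgt σ v = outdeg src tgt σa v :=
      fun v hx1 hx2 => (hσc v hx1 hx2).trans (hσac v hx1 hx2).symm
    have hz := balance src tgt h12 σ σa hm
    rw [hσa1] at hz
    exact_mod_cast hz
  have hrange : ∀ σ : E → Bool, (∀ v, v ≠ v1 → v ≠ v2 → outdeg src tgt σ v = g v) →
      m0 ≤ outdeg src tgt σ v1 ∧ outdeg src tgt σ v1 ≤ a := by
    intro σ hσc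
    have hmem : outdeg src tgt σ v1 ∈ T := (hmemT _).2 ⟨σ, rfl, hσc⟩
    exact ⟨T.min'_le _ hmem, T.le_max' _ hmem⟩
  ext d
  simp only [Set.mem_setOf_eq]
  constructor
  · rintro ⟨⟨σ, rfl⟩, hc⟩
    have h1 := hrange σ hc
    have h2 := hsum σ hc
    exact ⟨a - outdeg src tgt σ v1, by omega, by omega, by omega, hc⟩
  · rintro ⟨j, hj, hj1, hj2, hc⟩
    have hPd : P (d v1) := hint m0 a hPm0 ⟨σa, hσa1, hσac⟩ (d v1) (by omega) (by omega)
    obtain ⟨σ, hσ1, hσc⟩ := hPd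
    have h2 := hsum σ hσc
    refine ⟨⟨σ, ?_⟩, hc⟩
    funext v
    by_cases hv1 : v = v1
    · rw [hv1, hσ1]
    by_cases hv2 : v = v2
    · rw [hv2]; omega
    · rw [hc v hv1 hv2, ← hσc v hv1 hv2]
end

section
/- Let G = (V, E) be a finite bipartite multigraph. Then the number of subsets A ⊆ E such that the spanning subgraph (V, A) is a forest equals the number of distinct degree sequences deg_H = (deg_H(v_1),…,deg_H(v_n)) arising from spanning subgraphs H = (V, F) of G with F ⊆ E. -/
open Finset

variable {V E : Type*}

/-!
Orient every edge from `L` to its complement. An edge set is then a forest exactly when the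
incidence vectors `δ (tgt e) - δ (src e)` of its edges are linearly independent over `ℤ`, and,
since degrees on `L` and off `L` can be told apart by their sign, degree sequences correspond to
subset sums of incidence vectors. For any directed multigraph these two counts satisfy the same
deletion–contraction recurrence. For a non-loop edge `a` from `s` to `t`, independent sets
containing `a` correspond to independent sets of `G / a`, the image of the incidence vectors under
the map `φ` merging `s` into `t`, whose kernel is `ℤ u` for `u` the incidence vector of `a`. The
subset sums of `G` are `T ∪ (u + T)` with `T` those of `G - a`; as `T` has no gaps in the direction
`u`, this set has `#T + #(φ '' T)` elements, and `φ '' T` are the subset sums of `G / a`.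
-/

section SubsetSums

variable {M N : Type*} [AddCommGroup M] [AddCommGroup N]

theorem exists_mem_add_notMem {P : Finset M} (hP : P.Nonempty) {u : M}
    (hu : ∀ n : ℤ, n • u = 0 → n = 0) : ∃ x ∈ P, u + x ∉ P := by
  classical
  by_contra! h
  have himage : P.image (u + ·) = P :=
    eq_of_subset_of_card_le (image_subset_iff.2 h)
      (card_image_of_injective _ (add_right_injective u)).ge
  have hsum := congrArg (fun Q => ∑ x ∈ Q, x) himage
  rw [sum_image fun x _ y _ => (add_right_injective u ·), sum_add_distrib, sum_const,
    add_eq_right, ← natCast_zsmul] at hsum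
  exact hP.card_pos.ne' (by exact_mod_cast hu _ hsum)

/-- `(u + T) \ T` has exactly one point over each fibre of `φ`, since `T` meets every line
`x + ℤ u` in a run of consecutive points. -/
theorem card_union_image_add [DecidableEq M] [DecidableEq N] {T : Finset M} {u : M}
    (hu : ∀ n : ℤ, n • u = 0 → n = 0)
    (hT : ∀ x ∈ T, ∀ k : ℤ, 0 < k → x + k • u ∈ T → x + u ∈ T)
    (φ : M →+ N) (hφ : φ.ker = AddSubgroup.zmultiples u) :
    #(T ∪ T.image (u + ·)) = #T + #(T.image φ) := by
  have hφu : φ u = 0 := by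
    rw [← AddMonoidHom.mem_ker, hφ]; exact AddSubgroup.mem_zmultiples u
  have hfiber : ∀ x y, φ x = φ y → ∃ n : ℤ, y = x + n • u := by
    intro x y hxy
    have : y - x ∈ φ.ker := by rw [AddMonoidHom.mem_ker, map_sub, hxy, sub_self]
    rw [hφ, AddSubgroup.mem_zmultiples_iff] at this
    obtain ⟨n, hn⟩ := this
    exact ⟨n, by rw [hn]; abel⟩
  have hinj : Set.InjOn φ ↑(T.image (u + ·) \ T) := by
    simp only [coe_sdiff, coe_image, Set.InjOn, Set.mem_sdiff, Set.mem_image, mem_coe]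
    rintro _ ⟨⟨x₁, hx₁, rfl⟩, hy₁⟩ _ ⟨⟨x₂, hx₂, rfl⟩, hy₂⟩ hφx
    rw [map_add, map_add, hφu, zero_add, zero_add] at hφx
    obtain ⟨n, rfl⟩ := hfiber _ _ hφx
    rw [add_comm] at hy₁ hy₂
    rcases lt_trichotomy n 0 with hn | rfl | hn
    · refine absurd (hT _ hx₂ (-n) (by omega) ?_) hy₂
      rwa [neg_smul, add_neg_cancel_right]
    · simp
    · exact absurd (hT _ hx₁ n hn hx₂) hy₁
  have himage : (T.image (u + ·) \ T).image φ = T.image φ := by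
    refine Subset.antisymm ?_ fun _ hz => ?_
    · intro z hz
      simp only [mem_image, mem_sdiff] at hz ⊢
      obtain ⟨_, ⟨⟨x, hx, rfl⟩, -⟩, rfl⟩ := hz
      exact ⟨x, hx, by rw [map_add, hφu, zero_add]⟩
    obtain ⟨x₀, hx₀, rfl⟩ := mem_image.1 hz
    obtain ⟨x, hx, hux⟩ := exists_mem_add_notMem
      (P := T.filter (φ · = φ x₀)) ⟨x₀, mem_filter.2 ⟨hx₀, rfl⟩⟩ hu
    rw [mem_filter] at hx
    refine mem_image.2 ⟨u + x, mem_sdiff.2 ⟨mem_image_of_mem _ hx.1, fun hT' => hux ?_⟩, ?_⟩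
    · exact mem_filter.2 ⟨hT', by rw [map_add, hφu, zero_add, hx.2]⟩
    · rw [map_add, hφu, zero_add, hx.2]
  rw [← himage, card_image_of_injOn hinj, union_comm, ← card_sdiff_add_card, add_comm]

theorem linearIndepOn_insert_iff_comp [DecidableEq E] {w : E → M} {a : E} {S : Finset E}
    (ha : a ∉ S) (hu : ∀ n : ℤ, n • w a = 0 → n = 0) {φ : M →+ N}
    (hφ : φ.ker = AddSubgroup.zmultiples (w a)) :
    LinearIndepOn ℤ w ↑(insert a S) ↔ LinearIndepOn ℤ (φ ∘ w) ↑S := by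
  simp only [linearIndepOn_finset_iff, sum_insert ha, Function.comp_apply, ← map_zsmul,
    ← map_sum]
  have hφu : φ (w a) = 0 := by
    rw [← AddMonoidHom.mem_ker, hφ]; exact AddSubgroup.mem_zmultiples _
  constructor
  · intro h g hg e he
    rw [← AddMonoidHom.mem_ker, hφ, AddSubgroup.mem_zmultiples_iff] at hg
    obtain ⟨n, hn⟩ := hg
    have hsum : ∑ e ∈ S, Function.update g a (-n) e • w e = ∑ e ∈ S, g e • w e :=
      sum_congr rfl fun e he => by rw [Function.update_of_ne (ne_of_mem_of_not_mem he ha)]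
    have := h (Function.update g a (-n)) (by simp [hsum, ← hn]) e (mem_insert_of_mem he)
    rwa [Function.update_of_ne (ne_of_mem_of_not_mem he ha)] at this
  · intro h g hg
    have hS : ∀ e ∈ S, g e = 0 := h g (by
      simpa [hφu] using congrArg φ hg)
    rw [sum_eq_zero fun e he => by rw [hS e he, zero_smul], add_zero] at hg
    intro e he
    rcases mem_insert.1 he with rfl | he
    exacts [hu _ hg, hS e he]

theorem linearIndepOn_of_forall_exists_linearMap {w : E → M} {F : Finset E}
    (h : ∀ e ∈ F, ∃ ℓ : M →ₗ[ℤ] ℤ, ℓ (w e) ≠ 0 ∧ ∀ e' ∈ F, e' ≠ e → ℓ (w e') = 0) :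
    LinearIndepOn ℤ w ↑F := by
  refine linearIndepOn_finset_iff.2 fun g hg e he => ?_
  obtain ⟨ℓ, hℓe, hℓ⟩ := h e he
  have := congrArg ℓ hg
  rw [map_sum, map_zero, sum_eq_single_of_mem e he fun e' he' hne => by
    rw [map_smul, hℓ e' he' hne, smul_zero], map_smul, smul_eq_mul] at this
  exact (mul_eq_zero.1 this).resolve_right hℓe

theorem card_filter_powerset_insert [DecidableEq E] (p : Finset E → Prop) [DecidablePred p]
    {a : E} {S : Finset E} (ha : a ∉ S) :
    #{F ∈ (insert a S).powerset | p F} =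
      #{F ∈ S.powerset | p F} + #{F ∈ S.powerset | p (insert a F)} := by
  have hnotMem : ∀ F ∈ S.powerset, a ∉ F := fun F hF => notMem_of_mem_powerset_of_notMem hF ha
  rw [powerset_insert, filter_union, filter_image, card_union_of_disjoint, card_image_of_injOn]
  · intro F hF G hG hFG
    have := congrArg (·.erase a) hFG
    simp only [erase_insert (hnotMem F (mem_filter.1 hF).1),
      erase_insert (hnotMem G (mem_filter.1 hG).1)] at this
    exact this
  · refine disjoint_left.2 fun F hF hF' => ?_
    obtain ⟨G, -, rfl⟩ := mem_image.1 hF'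
    exact hnotMem _ (mem_filter.1 hF).1 (mem_insert_self a G)

def subsetSums [DecidableEq M] (w : E → M) (S : Finset E) : Finset M :=
  S.powerset.image fun F => ∑ e ∈ F, w e

theorem subsetSums_insert [DecidableEq E] [DecidableEq M] (w : E → M) {a : E} {S : Finset E}
    (ha : a ∉ S) :
    subsetSums w (insert a S) = subsetSums w S ∪ (subsetSums w S).image (w a + ·) := by
  rw [subsetSums, powerset_insert, image_union, image_image, subsetSums, image_image]
  exact congrArg _ (image_congr fun F hF =>
    sum_insert (notMem_of_mem_powerset_of_notMem hF ha))

open scoped Classical in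
theorem card_linearIndepOn_insert [DecidableEq E] {w : E → M} {a : E} {S : Finset E}
    (ha : a ∉ S) (hu : ∀ n : ℤ, n • w a = 0 → n = 0) {φ : M →+ N}
    (hφ : φ.ker = AddSubgroup.zmultiples (w a)) :
    #((insert a S).powerset.filter fun F : Finset E => LinearIndepOn ℤ w (F : Set E)) =
      #(S.powerset.filter fun F : Finset E => LinearIndepOn ℤ w (F : Set E)) +
        #(S.powerset.filter fun F : Finset E => LinearIndepOn ℤ (φ ∘ w) (F : Set E)) := by
  rw [card_filter_powerset_insert _ ha]
  refine congrArg _ (congrArg card (filter_congr fun F hF => ?_))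
  exact linearIndepOn_insert_iff_comp (notMem_of_mem_powerset_of_notMem hF ha) hu hφ

theorem card_subsetSums_insert [DecidableEq E] [DecidableEq M] [DecidableEq N] {w : E → M}
    {a : E} {S : Finset E} (ha : a ∉ S) (hu : ∀ n : ℤ, n • w a = 0 → n = 0)
    (hS : ∀ x ∈ subsetSums w S, ∀ k : ℤ, 0 < k →
      x + k • w a ∈ subsetSums w S → x + w a ∈ subsetSums w S)
    {φ : M →+ N} (hφ : φ.ker = AddSubgroup.zmultiples (w a)) :
    #(subsetSums w (insert a S)) = #(subsetSums w S) + #(subsetSums (φ ∘ w) S) := by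
  rw [subsetSums_insert w ha, card_union_image_add hu hS φ hφ, subsetSums, subsetSums,
    image_image]
  simp only [Function.comp_def, map_sum]

theorem sum_symmDiff_eq [DecidableEq E] (w : E → M) (F B : Finset E) :
    ∑ e ∈ symmDiff F B, w e = ∑ e ∈ F, w e + ∑ e ∈ B, (if e ∈ F then -w e else w e) := by
  rw [symmDiff_def, sup_eq_union, sum_union disjoint_sdiff_sdiff, sum_ite, sum_neg_distrib,
    filter_mem_eq_inter, filter_notMem_eq_sdiff, ← sum_inter_add_sum_sdiff F B, inter_comm]
  abel

end SubsetSums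

section IncidenceVectors

open Finsupp (single)

noncomputable def incVec (src tgt : E → V) (e : E) : V →₀ ℤ :=
  single (tgt e) 1 - single (src e) 1

/-- Path extraction: a vertex with positive net inflow is joined, by a directed path of arcs of
`A`, from a vertex with negative net inflow. -/
theorem exists_subset_sum_incVec_eq (a b : E → V) (A : Finset E) (t : V)
    (ht : 0 < (∑ e ∈ A, incVec a b e) t) :
    ∃ s, (∑ e ∈ A, incVec a b e) s < 0 ∧
      ∃ B ⊆ A, ∑ e ∈ B, incVec a b e = single t 1 - single s 1 := by
  classical
  induction A using Finset.strongInduction generalizing t with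
  | H A ih =>
  obtain ⟨e, he, rfl⟩ : ∃ e ∈ A, b e = t := by
    by_contra! h
    refine ht.not_ge ?_
    rw [Finsupp.finsetSum_apply]
    refine sum_nonpos fun e' he' => ?_
    simp only [incVec, Finsupp.coe_sub, Pi.sub_apply, Finsupp.single_apply, if_neg (h e' he')]
    split_ifs <;> simp
  have hsplit : ∀ v, (∑ e ∈ A, incVec a b e) v =
      (∑ e ∈ A.erase e, incVec a b e) v + (single (b e) 1 v - single (a e) 1 v) := fun v => by
    rw [← sum_erase_add _ _ he]; rfl
  by_cases hneg : (∑ e ∈ A, incVec a b e) (a e) < 0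
  · exact ⟨a e, hneg, {e}, singleton_subset_iff.2 he, by simp [incVec]⟩
  have hpos : 0 < (∑ e ∈ A.erase e, incVec a b e) (a e) := by
    rcases eq_or_ne (a e) (b e) with hab | hab
    · have := hsplit (b e)
      simp only [hab, sub_self, add_zero] at this
      rw [hab]
      omega
    · have := hsplit (a e)
      simp only [Finsupp.single_eq_same, Finsupp.single_apply, if_neg hab.symm] at this
      omega
  obtain ⟨s, hs, B, hB, hBsum⟩ := ih _ (erase_ssubset he) (a e) hpos
  refine ⟨s, ?_, insert e B, insert_subset he (hB.trans (erase_subset _ _)), ?_⟩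
  · rcases eq_or_ne s (b e) with rfl | hsb
    · have := hsplit (b e)
      simp only [Finsupp.single_eq_same, Finsupp.single_apply] at this
      split_ifs at this <;> omega
    · have := hsplit s
      simp only [Finsupp.single_apply, if_neg hsb.symm] at this
      split_ifs at this <;> omega
  · rw [sum_insert fun h => notMem_erase e A (hB h), hBsum, incVec]
    abel

variable (src tgt : E → V)

theorem ite_neg_incVec [DecidableEq E] (F : Finset E) (e : E) :
    (if e ∈ F then -incVec src tgt e else incVec src tgt e) =
      incVec (fun e => if e ∈ F then tgt e else src e)
        (fun e => if e ∈ F then src e else tgt e) e := by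
  by_cases h : e ∈ F <;> simp [incVec, h]

/-- Orient `F₁ ∆ F₂` so that its incidence vectors sum to `k • (δ t - δ s)`, extract a path from
`s` to `t`, and switch `F₁` along it. -/
theorem add_mem_subsetSums_incVec [DecidableEq E] [DecidableEq V] {S : Finset E}
    {x : V →₀ ℤ} (hx : x ∈ subsetSums (incVec src tgt) S) {s t : V} (hst : s ≠ t) {k : ℤ}
    (hk : 0 < k) (hxk : x + k • (single t 1 - single s 1) ∈ subsetSums (incVec src tgt) S) :
    x + (single t 1 - single s 1) ∈ subsetSums (incVec src tgt) S := by
  obtain ⟨F₁, hF₁, rfl⟩ := mem_image.1 hx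
  obtain ⟨F₂, hF₂, hsum₂⟩ := mem_image.1 hxk
  rw [mem_powerset] at hF₁ hF₂
  set a' := fun e => if e ∈ F₁ then tgt e else src e
  set b' := fun e => if e ∈ F₁ then src e else tgt e
  have hflip : ∀ B, ∑ e ∈ symmDiff F₁ B, incVec src tgt e =
      ∑ e ∈ F₁, incVec src tgt e + ∑ e ∈ B, incVec a' b' e := fun B => by
    rw [sum_symmDiff_eq]
    simp only [ite_neg_incVec, a', b']
  have hA : ∑ e ∈ symmDiff F₁ F₂, incVec a' b' e = k • (single t 1 - single s 1) := by
    have := hflip (symmDiff F₁ F₂)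
    rw [symmDiff_symmDiff_cancel_left, hsum₂] at this
    exact (add_left_cancel this).symm
  obtain ⟨s', hs', B, hB, hBsum⟩ := exists_subset_sum_incVec_eq a' b' (symmDiff F₁ F₂) t (by
    simp [hA, hst, hk])
  obtain rfl : s' = s := by
    by_contra hne
    rw [hA] at hs'
    simp only [Finsupp.smul_apply, Finsupp.coe_sub, Pi.sub_apply, Finsupp.single_apply,
      if_neg (Ne.symm hne), sub_zero, smul_eq_mul] at hs'
    split_ifs at hs' <;> omega
  refine mem_image.2 ⟨symmDiff F₁ B, mem_powerset.2 ?_, by rw [hflip, hBsum]⟩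
  exact symmDiff_le_sup.trans (union_subset hF₁
    (hB.trans (symmDiff_le_sup.trans (union_subset hF₁ hF₂))))

/-- Pushforward of vertex weights along the contraction of `s` into `t`. -/
noncomputable def mergeHom (s t : V) : (V →₀ ℤ) →+ (V →₀ ℤ) :=
  AddMonoidHom.mk' (fun f => f + f s • (single t 1 - single s 1)) fun f g => by
    simp only [Finsupp.coe_add, Pi.add_apply, add_smul]
    abel

theorem mergeHom_single [DecidableEq V] (s t a : V) :
    mergeHom s t (single a 1) = single (Function.update id s t a) 1 := by
  simp only [mergeHom, AddMonoidHom.mk'_apply]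
  rcases eq_or_ne a s with rfl | has
  · simp
  · simp [has, Ne.symm has]

theorem mergeHom_incVec [DecidableEq V] (s t : V) (e : E) :
    mergeHom s t (incVec src tgt e) =
      incVec (Function.update id s t ∘ src) (Function.update id s t ∘ tgt) e := by
  simp only [incVec, map_sub, mergeHom_single, Function.comp_apply]

theorem ker_mergeHom {s t : V} (hst : s ≠ t) :
    (mergeHom s t).ker = AddSubgroup.zmultiples (single t (1 : ℤ) - single s 1) := by
  classical
  have hu : mergeHom s t (single t 1 - single s 1) = 0 := by
    simp [map_sub, mergeHom_single, Function.update_of_ne (Ne.symm hst)]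
  ext f
  rw [AddMonoidHom.mem_ker, AddSubgroup.mem_zmultiples_iff]
  constructor
  · intro hf
    simp only [mergeHom, AddMonoidHom.mk'_apply] at hf
    exact ⟨-f s, by rw [neg_smul, ← eq_neg_of_add_eq_zero_left hf]⟩
  · rintro ⟨n, rfl⟩
    rw [map_zsmul, hu, smul_zero]

theorem eq_zero_of_zsmul_single_sub_single {s t : V} (hst : s ≠ t) :
    ∀ n : ℤ, n • (single t (1 : ℤ) - single s 1) = 0 → n = 0 := fun n h => by
  simpa [Finsupp.single_apply, hst] using congrArg (fun f : V →₀ ℤ => f t) h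

open scoped Classical in
theorem card_linearIndepOn_incVec_eq_card_subsetSums [DecidableEq V] (S : Finset E) :
    #(S.powerset.filter fun F : Finset E => LinearIndepOn ℤ (incVec src tgt) (F : Set E)) =
      #(subsetSums (incVec src tgt) S) := by
  induction S using Finset.induction_on generalizing src tgt with
  | empty => simp [subsetSums, filter_singleton, linearIndepOn_empty]
  | insert a S ha ih =>
    by_cases hloop : src a = tgt a
    · have hzero : incVec src tgt a = 0 := by simp [incVec, hloop]
      have hnone : ∀ F ∈ S.powerset, ¬ LinearIndepOn ℤ (incVec src tgt) ↑(insert a F) :=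
        fun F _ h => h.ne_zero (mem_coe.2 (mem_insert_self a F)) hzero
      rw [card_filter_powerset_insert _ ha, filter_false_of_mem hnone, card_empty, add_zero,
        subsetSums_insert _ ha, hzero]
      simp only [zero_add, image_id', union_self, ih]
    · have hu := eq_zero_of_zsmul_single_sub_single hloop
      have hcomp : mergeHom (src a) (tgt a) ∘ incVec src tgt =
          incVec (Function.update id (src a) (tgt a) ∘ src)
            (Function.update id (src a) (tgt a) ∘ tgt) :=
        funext (mergeHom_incVec src tgt _ _)
      rw [card_linearIndepOn_insert ha hu (ker_mergeHom hloop),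
        card_subsetSums_insert ha hu (fun x hx k hk hxk =>
          add_mem_subsetSums_incVec src tgt hx hloop hk hxk) (ker_mergeHom hloop),
        hcomp, ih, ih]

end IncidenceVectors

section Forests

open Finsupp (single)

variable (src tgt : E → V)

theorem incVec_eq_or_eq_neg {e : E} {x y : V} (h : s(src e, tgt e) = s(x, y)) :
    incVec src tgt e = single y 1 - single x 1 ∨
      incVec src tgt e = -(single y 1 - single x 1) := by
  rcases Sym2.eq_iff.1 h with ⟨rfl, rfl⟩ | ⟨rfl, rfl⟩
  · exact Or.inl rfl
  · exact Or.inr (neg_sub _ _).symm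

theorem single_sub_single_mem_span {F : Set E} {e : E} (he : e ∈ F) {x y : V}
    (h : s(src e, tgt e) = s(x, y)) :
    single y (1 : ℤ) - single x 1 ∈ Submodule.span ℤ (incVec src tgt '' F) := by
  have hmem : incVec src tgt e ∈ Submodule.span ℤ (incVec src tgt '' F) :=
    Submodule.subset_span (Set.mem_image_of_mem _ he)
  rcases incVec_eq_or_eq_neg src tgt h with h' | h'
  · rwa [h'] at hmem
  · rw [h', neg_mem_iff] at hmem
    exact hmem

theorem single_sub_single_mem_span_of_reachable {F : Set E} {H : SimpleGraph V}
    (hH : ∀ ⦃x y⦄, H.Adj x y → ∃ e ∈ F, s(src e, tgt e) = s(x, y)) {x y : V}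
    (h : H.Reachable x y) :
    single y (1 : ℤ) - single x 1 ∈ Submodule.span ℤ (incVec src tgt '' F) := by
  obtain ⟨p⟩ := h
  induction p with
  | nil => simp
  | cons hadj _ ih =>
    obtain ⟨e, he, hends⟩ := hH hadj
    convert add_mem ih (single_sub_single_mem_span src tgt he hends) using 1
    abel

theorem exists_ends_eq_of_adj {A : Finset E} {x y : V}
    (h : (SimpleGraph.fromRel fun x y => ∃ e ∈ A, s(src e, tgt e) = s(x, y)).Adj x y) :
    ∃ e ∈ A, s(src e, tgt e) = s(x, y) := by
  rcases (SimpleGraph.fromRel_adj _ _ _).1 h |>.2 with h | ⟨e, he, h⟩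
  exacts [h, ⟨e, he, h.trans Sym2.eq_swap⟩]

theorem isForestEdges_of_linearIndepOn {F : Finset E}
    (hF : LinearIndepOn ℤ (incVec src tgt) (F : Set E)) :
    IsForestEdges (fun e => s(src e, tgt e)) F := by
  have hspan : ∀ e ∈ F, ∀ x y, s(src e, tgt e) = s(x, y) →
      single y (1 : ℤ) - single x 1 ∉ Submodule.span ℤ (incVec src tgt '' (↑F \ {e})) := by
    intro e he x y hends hmem
    refine hF.notMem_span (mem_coe.2 he) ?_
    rcases incVec_eq_or_eq_neg src tgt hends with h | h
    · rwa [h]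
    · rwa [h, neg_mem_iff]
  refine ⟨fun e he hdiag => ?_, fun e he e' he' hends => ?_, ?_⟩
  · refine hF.ne_zero (mem_coe.2 he) ?_
    simp [incVec, Sym2.mk_isDiag_iff.1 hdiag]
  · by_contra hne
    have he' : e' ∈ (↑F \ {e} : Set E) := ⟨he', Ne.symm hne⟩
    exact hspan e he _ _ rfl (single_sub_single_mem_span src tgt he' hends.symm)
  · refine SimpleGraph.isAcyclic_iff_forall_adj_isBridge.2 fun x y hadj hreach => ?_
    obtain ⟨e, he, hends⟩ := exists_ends_eq_of_adj src tgt hadj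
    refine hspan e he x y hends (single_sub_single_mem_span_of_reachable src tgt ?_ hreach)
    intro a b hab
    rw [SimpleGraph.deleteEdges_adj, Set.mem_singleton_iff] at hab
    obtain ⟨e', he', hends'⟩ := exists_ends_eq_of_adj src tgt hab.1
    exact ⟨e', ⟨he', fun h => hab.2 (by rw [← hends', ← hends, Set.mem_singleton_iff.1 h])⟩,
      hends'⟩

/-- Removing a bridge `e` splits off the component `C` of `tgt e`; counting the net inflow into
`C` is a linear form that sees `e` and no other edge. -/
theorem linearIndepOn_of_isForestEdges {F : Finset E}
    (hF : IsForestEdges (fun e => s(src e, tgt e)) F) :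
    LinearIndepOn ℤ (incVec src tgt) (F : Set E) := by
  obtain ⟨hloop, hinj, hacyc⟩ := hF
  refine linearIndepOn_of_forall_exists_linearMap fun e he => ?_
  set G := SimpleGraph.fromRel fun x y => ∃ e ∈ F, s(src e, tgt e) = s(x, y)
  have hadj : ∀ e ∈ F, G.Adj (src e) (tgt e) := fun e he =>
    (SimpleGraph.fromRel_adj _ _ _).2
      ⟨fun h => hloop e he (Sym2.mk_isDiag_iff.2 h), Or.inl ⟨e, he, rfl⟩⟩
  set C := {v | (G.deleteEdges {s(src e, tgt e)}).Reachable v (tgt e)}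
  have hcut : ∀ e', Finsupp.linearCombination ℤ (C.indicator (1 : V → ℤ)) (incVec src tgt e') =
      C.indicator 1 (tgt e') - C.indicator 1 (src e') := fun e' => by
    simp [incVec]
  refine ⟨Finsupp.linearCombination ℤ (C.indicator (1 : V → ℤ)), ?_, fun e' he' hne => ?_⟩
  · have hsrc : src e ∉ C := SimpleGraph.isAcyclic_iff_forall_adj_isBridge.1 hacyc (hadj e he)
    rw [hcut, Set.indicator_of_mem (show tgt e ∈ C from SimpleGraph.Reachable.refl _),
      Set.indicator_of_notMem hsrc]
    simp
  · have hadj' : (G.deleteEdges {s(src e, tgt e)}).Adj (src e') (tgt e') := by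
      rw [SimpleGraph.deleteEdges_adj, Set.mem_singleton_iff]
      exact ⟨hadj e' he', fun h => hne (hinj he' he h)⟩
    have hiff : src e' ∈ C ↔ tgt e' ∈ C :=
      ⟨hadj'.symm.reachable.trans, hadj'.reachable.trans⟩
    rw [hcut, sub_eq_zero]
    by_cases h : tgt e' ∈ C
    · rw [Set.indicator_of_mem h, Set.indicator_of_mem (hiff.2 h), Pi.one_apply, Pi.one_apply]
    · rw [Set.indicator_of_notMem h, Set.indicator_of_notMem (mt hiff.1 h)]

theorem isForestEdges_iff_linearIndepOn (F : Finset E) :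
    IsForestEdges (fun e => s(src e, tgt e)) F ↔ LinearIndepOn ℤ (incVec src tgt) (F : Set E) :=
  ⟨linearIndepOn_of_isForestEdges src tgt, isForestEdges_of_linearIndepOn src tgt⟩

end Forests

section Bipartite

theorem degIn_congr [DecidableEq V] {src tgt a b : E → V}
    (h : ∀ e, s(a e, b e) = s(src e, tgt e)) : degIn a b = degIn src tgt := by
  funext F v
  simp only [degIn, card_filter, ← sum_add_distrib]
  refine sum_congr rfl fun e _ => ?_
  rcases Sym2.eq_iff.1 (h e) with ⟨h₁, h₂⟩ | ⟨h₁, h₂⟩ <;> rw [h₁, h₂]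
  exact add_comm _ _

theorem exists_orientation_of_bipartite (src tgt : E → V) (L : Finset V)
    (hbip : ∀ e, (src e ∈ L ∧ tgt e ∉ L) ∨ (src e ∉ L ∧ tgt e ∈ L)) :
    ∃ a b : E → V, (∀ e, a e ∈ L ∧ b e ∉ L) ∧ ∀ e, s(a e, b e) = s(src e, tgt e) := by
  have : ∀ e, ∃ x y, (x ∈ L ∧ y ∉ L) ∧ s(x, y) = s(src e, tgt e) := fun e => by
    rcases hbip e with h | h
    exacts [⟨_, _, h, rfl⟩, ⟨_, _, h.symm, Sym2.eq_swap⟩]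
  choose a b hab using this
  exact ⟨a, b, fun e => (hab e).1, fun e => (hab e).2⟩

theorem sum_incVec_apply [DecidableEq V] (a b : E → V) (F : Finset E) (v : V) :
    (∑ e ∈ F, incVec a b e) v = #{e ∈ F | b e = v} - #{e ∈ F | a e = v} := by
  simp only [Finsupp.finsetSum_apply, incVec, Finsupp.coe_sub, Pi.sub_apply, Finsupp.single_apply,
    sum_sub_distrib, sum_boole]

theorem sum_incVec_apply_eq_degIn [DecidableEq V] {a b : E → V} {L : Finset V}
    (hL : ∀ e, a e ∈ L ∧ b e ∉ L) (F : Finset E) (v : V) :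
    (∑ e ∈ F, incVec a b e) v = if v ∈ L then -(degIn a b F v : ℤ) else degIn a b F v := by
  rw [sum_incVec_apply, degIn]
  split_ifs with hv
  · rw [filter_false_of_mem fun e _ (h : b e = v) => (hL e).2 (h ▸ hv)]
    simp
  · rw [filter_false_of_mem fun e _ (h : a e = v) => hv (h ▸ (hL e).1)]
    simp

theorem card_range_degIn [Fintype E] [DecidableEq V] {a b : E → V} {L : Finset V}
    (hL : ∀ e, a e ∈ L ∧ b e ∉ L) :
    Nat.card (Set.range (degIn a b)) = #(subsetSums (incVec a b) univ) := by
  set σ : (V → ℕ) → V → ℤ := fun d v => if v ∈ L then -(d v : ℤ) else d v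
  have hσ : Function.Injective σ := fun d d' h => funext fun v => by
    have := congrFun h v
    simp only [σ] at this
    split_ifs at this <;> omega
  have hrange : Set.range (fun F => ⇑(∑ e ∈ F, incVec a b e)) = σ '' Set.range (degIn a b) := by
    rw [← Set.range_comp]
    exact congrArg _ (funext fun F => funext (sum_incVec_apply_eq_degIn hL F))
  rw [Nat.card_coe_set_eq, ← Set.ncard_image_of_injective _ hσ, ← hrange, Set.range_comp',
    Set.ncard_image_of_injective _ DFunLike.coe_injective, subsetSums, powerset_univ,
    ← Set.ncard_coe_finset, coe_image, coe_univ, Set.image_univ]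

end Bipartite

theorem stmt_13_general [Fintype E] [DecidableEq V] (src tgt : E → V)
    (L : Finset V)
    (hbip : ∀ e, (src e ∈ L ∧ tgt e ∉ L) ∨ (src e ∉ L ∧ tgt e ∈ L)) :
    Nat.card {A : Finset E // IsForestEdges (fun e => s(src e, tgt e)) A} =
      Nat.card (Set.range fun F : Finset E => degIn src tgt F) := by
  classical
  obtain ⟨a, b, hL, hends⟩ := exists_orientation_of_bipartite src tgt L hbip
  have hforest : (fun e => s(src e, tgt e)) = fun e => s(a e, b e) :=
    funext fun e => (hends e).symm
  rw [hforest, ← degIn_congr hends, card_range_degIn hL,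
    ← card_linearIndepOn_incVec_eq_card_subsetSums, powerset_univ, Nat.card_eq_fintype_card,
    Fintype.card_subtype]
  exact congrArg card (filter_congr fun F _ => isForestEdges_iff_linearIndepOn a b F)

/-- For a bipartite multigraph `G`, the number of spanning forests equals the
number of distinct degree sequences of spanning subgraphs of `G`. -/
theorem stmt_13 [Fintype V] [Fintype E] [DecidableEq V] (src tgt : E → V)
    (L : Finset V)
    (hbip : ∀ e, (src e ∈ L ∧ tgt e ∉ L) ∨ (src e ∉ L ∧ tgt e ∈ L)) :
    Nat.card {A : Finset E // IsForestEdges (fun e => s(src e, tgt e)) A} =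
      Nat.card (Set.range fun F : Finset E => degIn src tgt F) :=
  stmt_13_general src tgt L hbip
end

section
/- For any finite multigraph G in which some edge e is not a loop, the number of distinct outdegree vectors of orientations of G equals the number of distinct outdegree vectors of orientations of G−e plus the number of distinct outdegree vectors of orientations of G/e. -/
open Finset

variable {V E : Type*}

/-!
Write `e = uv` and let `S` be the set of outdegree vectors of `G - e`. Orienting `e` adds `1` at
`u` or at `v`, so the outdegree vectors of `G` form `(S + 1_u) ∪ (S + 1_v)`, while those of `G / e`
are the vectors of `S` with the coordinates `u` and `v` merged. If `d₁, d₂ ∈ S` agree off `{u, v}`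
and `d₁ u < d₂ u`, reversing a directed `u`–`v` path in an orientation realising `d₂` realises
`d₂ - 1_u + 1_v ∈ S`. So each fibre of the merge map is a chain `d, d - 1_u + 1_v, …` of some
length `k`, its translates by `1_u` and `1_v` make up `k + 1` vectors, and summing over the fibres
gives `|S| + |S / e|`.
-/

section MergeVec

variable {α : Type*} [DecidableEq α]

def mergeVec (u v : α) (d : α → ℕ) : {x : α // x ≠ v} → ℕ :=
  fun x => if x.1 = u then d u + d v else d x.1

lemma mergeVec_eq_mergeVec_iff {u v : α} (huv : u ≠ v) {d₁ d₂ : α → ℕ} :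
    mergeVec u v d₁ = mergeVec u v d₂ ↔
      (∀ w, w ≠ u → w ≠ v → d₁ w = d₂ w) ∧ d₁ u + d₁ v = d₂ u + d₂ v := by
  constructor
  · intro h
    refine ⟨fun w hwu hwv => ?_, ?_⟩
    · simpa [mergeVec, hwu] using congrFun h ⟨w, hwv⟩
    · simpa [mergeVec] using congrFun h ⟨u, huv⟩
  · rintro ⟨hoff, hsum⟩
    funext x
    by_cases hx : x.1 = u
    · simp [mergeVec, hx, hsum]
    · simp [mergeVec, hx, hoff x.1 hx x.2]

lemma mergeVec_eq_of_add_single_eq {u v : α} (huv : u ≠ v) {d d' : α → ℕ}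
    (h : d + Pi.single v 1 = d' + Pi.single u 1) :
    mergeVec u v d' = mergeVec u v d ∧ d' u < d u := by
  have hw : ∀ w, d w + (if w = v then 1 else 0) = d' w + (if w = u then 1 else 0) := fun w => by
    simpa [Pi.single_apply] using congrFun h w
  have hu := hw u
  have hv := hw v
  simp only [if_neg huv, if_neg huv.symm, if_true] at hu hv
  refine ⟨(mergeVec_eq_mergeVec_iff huv).2 ⟨fun w hwu hwv => ?_, by omega⟩, by omega⟩
  simpa [hwu, hwv] using (hw w).symm

theorem ncard_image_add_single_union {u v : α} (huv : u ≠ v) {S : Set (α → ℕ)} (hS : S.Finite)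
    (hexch : ∀ d₁ ∈ S, ∀ d₂ ∈ S, (∀ w, w ≠ u → w ≠ v → d₁ w = d₂ w) → d₁ u < d₂ u →
      d₂ + Pi.single v 1 ∈ (· + Pi.single u 1) '' S) :
    ((· + Pi.single u 1) '' S ∪ (· + Pi.single v 1) '' S).ncard =
      S.ncard + (mergeVec u v '' S).ncard := by
  -- `B` consists of the vectors with the least `u`-coordinate in their fibre.
  set B := {d ∈ S | d + Pi.single v 1 ∉ (· + Pi.single u 1) '' S}
  have hdiff :
      (· + Pi.single v 1) '' S \ (· + Pi.single u 1) '' S = (· + Pi.single v 1) '' B := by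
    ext c
    constructor
    · rintro ⟨⟨d, hd, rfl⟩, hc⟩
      exact ⟨d, ⟨hd, hc⟩, rfl⟩
    · rintro ⟨d, ⟨hd, hc⟩, rfl⟩
      exact ⟨⟨d, hd, rfl⟩, hc⟩
  have hsurj : mergeVec u v '' B = mergeVec u v '' S := by
    refine (Set.image_mono fun d hd => hd.1).antisymm ?_
    rintro _ ⟨d, hd, rfl⟩
    obtain ⟨d₀, ⟨hd₀, hmerge⟩, hmin⟩ := Set.exists_min_image
      {d' ∈ S | mergeVec u v d' = mergeVec u v d} (· u) (hS.subset fun _ h => h.1) ⟨d, hd, rfl⟩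
    refine ⟨d₀, ⟨hd₀, ?_⟩, hmerge⟩
    rintro ⟨d', hd', h⟩
    obtain ⟨hmerge', hlt⟩ := mergeVec_eq_of_add_single_eq huv h.symm
    exact (hmin d' ⟨hd', hmerge'.trans hmerge⟩).not_gt hlt
  have hinj : Set.InjOn (mergeVec u v) B := by
    intro d₁ h₁ d₂ h₂ h
    obtain ⟨hoff, hsum⟩ := (mergeVec_eq_mergeVec_iff huv).1 h
    have hu : d₁ u = d₂ u := by
      by_contra hne
      rcases Nat.lt_or_gt_of_ne hne with hlt | hlt
      · exact h₂.2 (hexch d₁ h₁.1 d₂ h₂.1 hoff hlt)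
      · exact h₁.2 (hexch d₂ h₂.1 d₁ h₁.1 (fun w hwu hwv => (hoff w hwu hwv).symm) hlt)
    funext w
    by_cases hwu : w = u
    · rw [hwu, hu]
    by_cases hwv : w = v
    · rw [hwv]; omega
    exact hoff w hwu hwv
  rw [← Set.union_sdiff_self, Set.ncard_union_eq Set.disjoint_sdiff_right (hS.image _)
      ((hS.image _).sdiff), hdiff, Set.ncard_image_of_injective _ (add_left_injective _),
    Set.ncard_image_of_injective _ (add_left_injective _), ← hsurj, hinj.ncard_image]

end MergeVec

section Orientation

variable (src tgt : E → V)

lemma otail_comp {W : Type*} (π : V → W) (σ : E → Bool) (f : E) :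
    otail (fun f => π (src f)) (fun f => π (tgt f)) σ f = π (otail src tgt σ f) := by
  unfold otail
  split_ifs <;> rfl

lemma otail_eq_ohead_of_otail_ne {σ τ : E → Bool} {f : E}
    (h : otail src tgt τ f ≠ otail src tgt σ f) :
    τ f = !σ f ∧ otail src tgt τ f = ohead src tgt σ f := by
  cases hσ : σ f <;> cases hτ : τ f <;> simp_all [otail, ohead]

variable [DecidableEq V] [Fintype E]

lemma exists_otail_eq_and_otail_ne {σ τ : E → Bool} {a : V}
    (ha : outdeg src tgt τ a < outdeg src tgt σ a) :
    ∃ f, otail src tgt σ f = a ∧ otail src tgt τ f ≠ a := by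
  by_contra! h
  exact ha.not_ge (card_le_card fun f hf => mem_filter.2 ⟨mem_univ f, h f (mem_filter.1 hf).2⟩)

variable [DecidableEq E]

lemma outdeg_eq_outdeg_subtype_ne_add_single (e : E) (σ : E → Bool) :
    outdeg src tgt σ =
      outdeg (fun f : {f // f ≠ e} => src f) (fun f => tgt f) (fun f => σ f) +
        Pi.single (otail src tgt σ e) 1 := by
  funext w
  simp only [outdeg, Pi.add_apply, Pi.single_apply, card_filter]
  rw [Fintype.sum_eq_add_sum_subtype_ne _ e, add_comm]
  exact congrArg _ (if_congr eq_comm rfl rfl)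

lemma outdeg_update_not_add_single (σ : E → Bool) (f : E) :
    outdeg src tgt (Function.update σ f (!σ f)) + Pi.single (otail src tgt σ f) 1 =
      outdeg src tgt σ + Pi.single (ohead src tgt σ f) 1 := by
  have hrestrict : (fun g : {g // g ≠ f} => Function.update σ f (!σ f) g) =
      fun g : {g // g ≠ f} => σ g :=
    funext fun g => Function.update_of_ne g.2 _ _
  have hflip : otail src tgt (Function.update σ f (!σ f)) f = ohead src tgt σ f := by
    cases h : σ f <;> simp [otail, ohead, h]
  rw [outdeg_eq_outdeg_subtype_ne_add_single src tgt f,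
    outdeg_eq_outdeg_subtype_ne_add_single src tgt f σ, hrestrict, hflip, add_right_comm]

lemma card_filter_update_not_ne_lt {σ τ : E → Bool} {f : E} (hf : σ f ≠ τ f) :
    #(univ.filter fun g => Function.update σ f (!σ f) g ≠ τ g) <
      #(univ.filter fun g => σ g ≠ τ g) := by
  refine card_lt_card ⟨fun g hg => ?_, fun hsub => ?_⟩
  · by_cases hgf : g = f
    · simpa [hgf] using hf
    · simpa [Function.update_of_ne hgf] using hg
  · have := hsub (mem_filter.2 ⟨mem_univ f, hf⟩)
    simp_all

-- Reverse a directed path from `a` to `b`, found greedily: flip an arc leaving `a` that `τ`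
-- orients the other way; its head `c` inherits the surplus and `σ` moves closer to `τ`.
theorem exists_outdeg_add_single_eq (τ σ : E → Bool) (a b : V)
    (ha : outdeg src tgt τ a < outdeg src tgt σ a)
    (hle : ∀ w, w ≠ b → outdeg src tgt τ w ≤ outdeg src tgt σ w) :
    ∃ ρ, outdeg src tgt ρ + Pi.single a 1 = outdeg src tgt σ + Pi.single b 1 := by
  obtain ⟨f, hfσ, hfτ⟩ := exists_otail_eq_and_otail_ne src tgt ha
  obtain ⟨hστ, hτf⟩ := otail_eq_ohead_of_otail_ne src tgt (hfσ ▸ hfτ)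
  set c := ohead src tgt σ f
  have hca : c ≠ a := hτf ▸ hfτ
  set σ' := Function.update σ f (!σ f)
  have hflip : outdeg src tgt σ' + Pi.single a 1 = outdeg src tgt σ + Pi.single c 1 :=
    hfσ ▸ outdeg_update_not_add_single src tgt σ f
  by_cases hcb : c = b
  · exact ⟨σ', hcb ▸ hflip⟩
  have hw : ∀ w, outdeg src tgt σ' w + (if w = a then 1 else 0) =
      outdeg src tgt σ w + (if w = c then 1 else 0) := fun w => by
    simpa [Pi.single_apply] using congrFun hflip w
  have hc : outdeg src tgt τ c < outdeg src tgt σ' c := by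
    have h := hw c
    rw [if_neg hca, if_pos rfl] at h
    have := hle c hcb
    omega
  have hle' : ∀ w, w ≠ b → outdeg src tgt τ w ≤ outdeg src tgt σ' w := fun w hwb => by
    have h := hw w
    have := hle w hwb
    by_cases hwa : w = a
    · subst hwa
      rw [if_neg hca.symm, if_pos rfl] at h
      omega
    · rw [if_neg hwa] at h
      omega
  obtain ⟨ρ, hρ⟩ := exists_outdeg_add_single_eq τ σ' c b hc hle'
  refine ⟨ρ, add_right_cancel (b := Pi.single c 1) ?_⟩
  calc outdeg src tgt ρ + Pi.single a 1 + Pi.single c 1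
      = outdeg src tgt ρ + Pi.single c 1 + Pi.single a 1 := add_right_comm _ _ _
    _ = outdeg src tgt σ' + Pi.single a 1 + Pi.single b 1 := by rw [hρ, add_right_comm]
    _ = outdeg src tgt σ + Pi.single b 1 + Pi.single c 1 := by rw [hflip, add_right_comm]
termination_by #(univ.filter fun g => σ g ≠ τ g)
decreasing_by exact card_filter_update_not_ne_lt (by simp [hστ])

lemma range_outdeg_eq_union (e : E) :
    Set.range (outdeg src tgt) =
      (· + Pi.single (src e) 1) '' Set.range
          (outdeg (fun f : {f // f ≠ e} => src f) (fun f => tgt f)) ∪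
        (· + Pi.single (tgt e) 1) '' Set.range
          (outdeg (fun f : {f // f ≠ e} => src f) (fun f => tgt f)) := by
  ext d
  constructor
  · rintro ⟨σ, rfl⟩
    rw [outdeg_eq_outdeg_subtype_ne_add_single src tgt e]
    cases h : σ e
    · exact Or.inl ⟨_, ⟨fun f => σ f, rfl⟩, by simp [otail, h]⟩
    · exact Or.inr ⟨_, ⟨fun f => σ f, rfl⟩, by simp [otail, h]⟩
  · have hext (b : Bool) (σ : {f // f ≠ e} → Bool) :
        ∃ σ₀ : E → Bool, σ₀ e = b ∧ (fun f : {f // f ≠ e} => σ₀ f) = σ :=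
      ⟨(Equiv.funSplitAt e Bool).symm (b, σ),
        Prod.ext_iff.1 ((Equiv.funSplitAt e Bool).apply_symm_apply (b, σ))⟩
    rintro (⟨_, ⟨σ, rfl⟩, rfl⟩ | ⟨_, ⟨σ, rfl⟩, rfl⟩)
    · obtain ⟨σ₀, he, rfl⟩ := hext false σ
      exact ⟨σ₀, by rw [outdeg_eq_outdeg_subtype_ne_add_single src tgt e, otail, he]; rfl⟩
    · obtain ⟨σ₀, he, rfl⟩ := hext true σ
      exact ⟨σ₀, by rw [outdeg_eq_outdeg_subtype_ne_add_single src tgt e, otail, he]; rfl⟩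

end Orientation

section Contraction

variable [DecidableEq V] [Fintype E] [DecidableEq E]

def contractVertex (u v : V) (huv : u ≠ v) (y : V) : {x : V // x ≠ v} :=
  if h : y = v then ⟨u, huv⟩ else ⟨y, h⟩

lemma contractVertex_eq_iff {u v : V} (huv : u ≠ v) (y : V) (x : {x : V // x ≠ v}) :
    contractVertex u v huv y = x ↔ if x.1 = u then y = u ∨ y = v else y = x.1 := by
  by_cases hy : y = v
  · subst hy
    have : y ≠ x.1 := x.2.symm
    by_cases hx : x.1 = u <;> simp [contractVertex, Subtype.ext_iff, hx, eq_comm, this]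
  · by_cases hx : x.1 = u <;> simp [contractVertex, Subtype.ext_iff, hx, hy]

lemma outdeg_comp_contractVertex (src tgt : E → V) {u v : V} (huv : u ≠ v) (σ : E → Bool) :
    outdeg (fun f => contractVertex u v huv (src f)) (fun f => contractVertex u v huv (tgt f)) σ =
      mergeVec u v (outdeg src tgt σ) := by
  funext x
  simp only [outdeg, mergeVec, otail_comp, contractVertex_eq_iff]
  split_ifs
  · rw [filter_or,
      card_union_of_disjoint (disjoint_filter.2 fun _ _ h h' => huv (h.symm.trans h'))]
  · rfl

lemma range_outdeg_comp_contractVertex (src tgt : E → V) {u v : V} (huv : u ≠ v) :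
    Set.range (outdeg (fun f => contractVertex u v huv (src f))
        (fun f => contractVertex u v huv (tgt f))) =
      mergeVec u v '' Set.range (outdeg src tgt) := by
  rw [← Set.range_comp]
  exact congrArg Set.range (funext (outdeg_comp_contractVertex src tgt huv))

end Contraction

/-- If `e` is not a loop, the number of distinct outdegree vectors of
orientations of `G` equals that of `G - e` plus that of `G / e`. -/
theorem stmt_16 [Fintype E] [DecidableEq V] [DecidableEq E]
    (src tgt : E → V) (e : E) (hne : src e ≠ tgt e) :
    Nat.card (Set.range fun σ : E → Bool => outdeg src tgt σ) =
      Nat.card (Set.range fun σ : {f : E // f ≠ e} → Bool =>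
        outdeg (fun f => src f.1) (fun f => tgt f.1) σ) +
      Nat.card (Set.range fun σ : {f : E // f ≠ e} → Bool =>
        outdeg (V := {x : V // x ≠ tgt e})
          (fun f => if h : src f.1 = tgt e then ⟨src e, hne⟩ else ⟨src f.1, h⟩)
          (fun f => if h : tgt f.1 = tgt e then ⟨src e, hne⟩ else ⟨tgt f.1, h⟩) σ) := by
  simp only [Nat.card_coe_set_eq]
  rw [range_outdeg_eq_union src tgt e, ncard_image_add_single_union hne (Set.finite_range _)]
  · exact congrArg (_ + Set.ncard ·) (range_outdeg_comp_contractVertex _ _ hne).symm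
  rintro _ ⟨τ, rfl⟩ _ ⟨σ, rfl⟩ hoff hlt
  obtain ⟨ρ, hρ⟩ := exists_outdeg_add_single_eq _ _ τ σ (src e) (tgt e) hlt fun w hw => by
    by_cases hwu : w = src e
    · exact hwu ▸ hlt.le
    · exact (hoff w hwu hw).le
  exact ⟨_, ⟨ρ, rfl⟩, hρ⟩
end
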